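/- arXiv:2605.19502 — 9 statements merged into one kernel-verified Lean document; each statement's English description precedes it below -/
import Mathlib

section
/- Let p be an odd prime and let q(X) = X^2 + aX + b be irreducible over F_p with roots λ, μ in F_{p^2}. For 1 ≤ m ≤ p-1, the sum over x in F_p^× of x^m/q(x) equals -(λ^m + μ^m)/(a^2 - 4b). -/
/-!
Factor `X^2 + aX + b = (X - λ)(X - μ)` and split `x^m / (x^2 + ax + b)` into partial fractions.
For `c` outside `𝔽_p`, summing the geometric identity `(x^p - c^p)/(x - c) = ∑_{i<p} x^i c^(p-1-i)`
over `x ∈ 𝔽_p`, where `x^p = x` and the power sums `∑ x^i` vanish for `i < p - 1` and equal `-1`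
for `i = p - 1`, gives `∑_x 1/(x - c) = 1/(c^p - c)`, hence `∑_x x^m/(x - c) = c^m/(c^p - c)` for
`m ≤ p - 1`. Frobenius swaps the two roots, so `λ^p - λ = μ - λ` and `μ^p - μ = λ - μ`, and the
two partial sums combine to `-(λ^m + μ^m)/(λ - μ)^2`.
-/

open Finset

theorem Fintype.sum_units_eq_sum {G₀ M : Type*} [GroupWithZero G₀] [Fintype G₀] [Fintype G₀ˣ]
    [AddCommMonoid M] {f : G₀ → M} (hf : f 0 = 0) : ∑ u : G₀ˣ, f u = ∑ x, f x := by
  classical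
  rw [Fintype.sum_eq_add_sum_subtype_ne f 0, hf, zero_add]
  exact Fintype.sum_equiv unitsEquivNeZero _ _ fun _ => rfl

namespace FiniteField

variable {F K : Type*} [Field F] [Fintype F] [Field K]

local notation "q" => Fintype.card F

theorem sum_pow_card_sub_one : ∑ x : F, x ^ (q - 1) = -1 := by
  classical
  have hq : q - 1 ≠ 0 := by have := Fintype.one_lt_card (α := F); omega
  rw [← Fintype.sum_units_eq_sum (zero_pow hq), sum_pow_units, if_pos dvd_rfl]

variable (A : F →+* K)

theorem sum_map_pow_eq_map_sum_pow (i : ℕ) : ∑ x : F, A x ^ i = A (∑ x : F, x ^ i) := by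
  simp only [← map_pow, ← map_sum]

theorem sub_pow_card_mul_sum_inv_sub {c : K} (hc : ∀ x, A x ≠ c) :
    (c - c ^ q) * ∑ x : F, (A x - c)⁻¹ = -1 := by
  have hgeom (x : F) :
      ∑ i ∈ range q, A x ^ i * c ^ (q - 1 - i) = 1 + (c - c ^ q) * (A x - c)⁻¹ := by
    have hx : A x - c ≠ 0 := sub_ne_zero.2 (hc x)
    have := geom_sum₂_mul (A x) c q
    rw [← map_pow, pow_card] at this
    field_simp
    linear_combination this
  have hq : q = q - 1 + 1 := (Nat.sub_add_cancel Fintype.card_pos).symm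
  calc (c - c ^ q) * ∑ x : F, (A x - c)⁻¹
      = ∑ x : F, ∑ i ∈ range q, A x ^ i * c ^ (q - 1 - i) := by
        simp only [hgeom, sum_add_distrib, sum_const, card_univ, ← mul_sum, nsmul_one,
          ← map_natCast A, cast_card_eq_zero, map_zero, zero_add]
    _ = ∑ x : F, A x ^ (q - 1) := by
        conv_lhs => rw [sum_comm, hq, sum_range_succ]
        simp only [← sum_mul, sum_map_pow_eq_map_sum_pow A]
        rw [sum_eq_zero fun i hi => by
          rw [sum_pow_lt_card_sub_one F i (mem_range.1 hi), map_zero, zero_mul]]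
        simp
    _ = -1 := by rw [sum_map_pow_eq_map_sum_pow, sum_pow_card_sub_one, map_neg, map_one]

theorem pow_card_ne_self {c : K} (hc : ∀ x, A x ≠ c) : c ^ q ≠ c := fun h => by
  simpa [h] using sub_pow_card_mul_sum_inv_sub A hc

theorem sum_inv_sub {c : K} (hc : ∀ x, A x ≠ c) :
    ∑ x : F, (A x - c)⁻¹ = (c ^ q - c)⁻¹ := by
  refine (inv_eq_of_mul_eq_one_right ?_).symm
  linear_combination -sub_pow_card_mul_sum_inv_sub A hc

theorem sum_pow_div_sub {c : K} (hc : ∀ x, A x ≠ c) {m : ℕ} (hm : m ≤ q - 1) :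
    ∑ x : F, A x ^ m / (A x - c) = c ^ m / (c ^ q - c) := by
  have hsplit (x : F) :
      A x ^ m / (A x - c) = ∑ i ∈ range m, A x ^ i * c ^ (m - 1 - i) + c ^ m * (A x - c)⁻¹ := by
    have hx : A x - c ≠ 0 := sub_ne_zero.2 (hc x)
    have := geom_sum₂_mul (A x) c m
    field_simp
    linear_combination -this
  have hvanish : ∑ x : F, ∑ i ∈ range m, A x ^ i * c ^ (m - 1 - i) = 0 := by
    rw [sum_comm]
    refine sum_eq_zero fun i hi => ?_
    rw [← sum_mul, sum_map_pow_eq_map_sum_pow,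
      sum_pow_lt_card_sub_one F i ((mem_range.1 hi).trans_le hm), map_zero, zero_mul]
  rw [sum_congr rfl fun x _ => hsplit x, sum_add_distrib, hvanish, ← mul_sum, sum_inv_sub A hc,
    zero_add, div_eq_mul_inv]

end FiniteField

section Quadratic

variable {K : Type*} [Field K] {s t lam mu : K}

theorem add_eq_neg_and_mul_eq_of_roots (hne : lam ≠ mu) (hlam : lam ^ 2 + s * lam + t = 0)
    (hmu : mu ^ 2 + s * mu + t = 0) : lam + mu = -s ∧ lam * mu = t := by
  have hsum : lam + mu + s = 0 := by
    have h : (lam - mu) * (lam + mu + s) = 0 := by linear_combination hlam - hmu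
    exact (mul_eq_zero.1 h).resolve_left (sub_ne_zero.2 hne)
  exact ⟨by linear_combination hsum, by linear_combination lam * hsum - hlam⟩

theorem quadratic_eq_mul_sub_mul_sub (hne : lam ≠ mu) (hlam : lam ^ 2 + s * lam + t = 0)
    (hmu : mu ^ 2 + s * mu + t = 0) (z : K) : z ^ 2 + s * z + t = (z - lam) * (z - mu) := by
  obtain ⟨hsum, hprod⟩ := add_eq_neg_and_mul_eq_of_roots hne hlam hmu
  linear_combination z * hsum - hprod

end Quadratic

section Frobenius

variable {p : ℕ} [Fact p.Prime] {K : Type*} [Field K] [CharP K p] (A : ZMod p →+* K)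
  {a b : ZMod p} {lam mu : K}

theorem pow_char_root_of_root (hlam : lam ^ 2 + A a * lam + A b = 0) :
    (lam ^ p) ^ 2 + A a * lam ^ p + A b = 0 := by
  have h := congrArg (frobenius K p) hlam
  rw [map_add, map_add, map_mul, map_pow, map_zero] at h
  simpa only [frobenius_def, ← map_pow A, ZMod.pow_card] using h

theorem pow_char_eq_of_roots (hne : lam ≠ mu) (hlam : lam ^ 2 + A a * lam + A b = 0)
    (hmu : mu ^ 2 + A a * mu + A b = 0) (hlam_notMem : ∀ x, A x ≠ lam) : lam ^ p = mu := by
  have h := pow_char_root_of_root A hlam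
  rw [quadratic_eq_mul_sub_mul_sub hne hlam hmu, mul_eq_zero, sub_eq_zero, sub_eq_zero] at h
  refine h.resolve_left ?_
  simpa only [ZMod.card] using FiniteField.pow_card_ne_self A hlam_notMem

end Frobenius

open FiniteField in
theorem stmt2_general (p : ℕ) [Fact p.Prime] (a b : ZMod p)
    (K : Type*) [Field K] [CharP K p]
    (hirr : ∀ x : ZMod p, x ^ 2 + a * x + b ≠ 0)
    (lam mu : K)
    (hlam : lam ^ 2 + ZMod.castHom (dvd_refl p) K a * lam + ZMod.castHom (dvd_refl p) K b = 0)
    (hmu : mu ^ 2 + ZMod.castHom (dvd_refl p) K a * mu + ZMod.castHom (dvd_refl p) K b = 0)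
    (hne : lam ≠ mu)
    (m : ℕ) (hm1 : 1 ≤ m) (hm2 : m ≤ p - 1) :
    ∑ x : (ZMod p)ˣ,
        (ZMod.castHom (dvd_refl p) K (x : ZMod p)) ^ m /
          ((ZMod.castHom (dvd_refl p) K (x : ZMod p)) ^ 2 +
            ZMod.castHom (dvd_refl p) K a * ZMod.castHom (dvd_refl p) K (x : ZMod p) +
            ZMod.castHom (dvd_refl p) K b)
      = -(lam ^ m + mu ^ m) / ZMod.castHom (dvd_refl p) K (a ^ 2 - 4 * b) := by
  set A := ZMod.castHom (dvd_refl p) K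
  have hnotMem {c : K} (hc : c ^ 2 + A a * c + A b = 0) (x : ZMod p) : A x ≠ c := fun hx =>
    hirr x (A.injective (by simp [hx, hc]))
  have hm : m ≤ Fintype.card (ZMod p) - 1 := by rwa [ZMod.card]
  obtain ⟨hsum, hprod⟩ := add_eq_neg_and_mul_eq_of_roots hne hlam hmu
  have hdisc : A (a ^ 2 - 4 * b) = (lam - mu) ^ 2 := by
    simp only [map_sub, map_mul, map_pow, map_ofNat]
    linear_combination (A a - lam - mu) * hsum + 4 * hprod
  have hpartial (x : ZMod p) : A x ^ m / (A x ^ 2 + A a * A x + A b)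
      = (A x ^ m / (A x - lam) - A x ^ m / (A x - mu)) / (lam - mu) := by
    have := sub_ne_zero.2 (hnotMem hlam x)
    have := sub_ne_zero.2 (hnotMem hmu x)
    have := sub_ne_zero.2 hne
    rw [quadratic_eq_mul_sub_mul_sub hne hlam hmu]
    field_simp
    ring
  rw [Fintype.sum_units_eq_sum (f := fun x => A x ^ m / (A x ^ 2 + A a * A x + A b)) 
    (by simp [zero_pow (Nat.one_le_iff_ne_zero.1 hm1)])]
  simp only [hpartial, ← sum_div, sum_sub_distrib]
  rw [sum_pow_div_sub A (hnotMem hlam) hm, sum_pow_div_sub A (hnotMem hmu) hm, ZMod.card,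
    pow_char_eq_of_roots A hne hlam hmu (hnotMem hlam),
    pow_char_eq_of_roots A hne.symm hmu hlam (hnotMem hmu), hdisc]
  have := sub_ne_zero.2 hne
  have := sub_ne_zero.2 hne.symm
  field_simp
  ring

/-- If `q(X)=X²+aX+b` is irreducible over `𝔽_p` with roots `λ, μ` in a quadratic extension,
then for `1 ≤ m ≤ p-1`, `∑_{x ∈ 𝔽_p^×} x^m/q(x) = -(λ^m+μ^m)/(a²-4b)`. -/
theorem stmt2 (p : ℕ) [Fact p.Prime] (hodd : p ≠ 2) (a b : ZMod p)
    (K : Type*) [Field K] [CharP K p]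
    (hirr : ∀ x : ZMod p, x ^ 2 + a * x + b ≠ 0)
    (lam mu : K)
    (hlam : lam ^ 2 + ZMod.castHom (dvd_refl p) K a * lam + ZMod.castHom (dvd_refl p) K b = 0)
    (hmu : mu ^ 2 + ZMod.castHom (dvd_refl p) K a * mu + ZMod.castHom (dvd_refl p) K b = 0)
    (hne : lam ≠ mu)
    (m : ℕ) (hm1 : 1 ≤ m) (hm2 : m ≤ p - 1) :
    ∑ x : (ZMod p)ˣ,
        (ZMod.castHom (dvd_refl p) K (x : ZMod p)) ^ m /
          ((ZMod.castHom (dvd_refl p) K (x : ZMod p)) ^ 2 +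
            ZMod.castHom (dvd_refl p) K a * ZMod.castHom (dvd_refl p) K (x : ZMod p) +
            ZMod.castHom (dvd_refl p) K b)
      = -(lam ^ m + mu ^ m) / ZMod.castHom (dvd_refl p) K (a ^ 2 - 4 * b) :=
  stmt2_general p a b K hirr lam mu hlam hmu hne m hm1 hm2
end

section
/- Let p be an odd prime, q(X)=X^2+aX+b irreducible over F_p with roots λ,μ in F_{p^2}, and R = λ/μ. If the multiplicative order of R is even, then the product over m = 1,...,p-1 of (λ^m + μ^m) is zero; hence det[(i^2+aij+bj^2)^{p-2}]_{1≤i,j≤p-1} ≡ 0 (mod p). -/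
/-!
Since `q` has no root in `𝔽_p`, the Frobenius `x ↦ x ^ p` swaps `λ` and `μ`, so
`R ^ (p + 1) = 1`. If `R` has order `2k`, then `R ^ k = -1`, i.e. `λ ^ k + μ ^ k = 0` with
`1 ≤ k ≤ p - 1`.

Over `K` the matrix entries are `((i - λ j) (i - μ j))⁻¹`, and the vector
`j ↦ j ^ (p + 1 - k)` lies in the kernel: after partial fractions, expanding `(i - ν j)⁻¹` as a
geometric series of length `p - 1` (using `j ^ (p - 1) = 1`) and summing over `j` by
orthogonality of the characters `j ↦ j ^ s` of `𝔽_p^×`, row `i` becomes a multiple of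
`λ ^ k + μ ^ k`.
-/

open Finset

section RootPair

variable {F : Type*} [Field F] {A B lam mu : F}

theorem add_eq_neg_and_mul_eq_of_quadratic (hlam : lam ^ 2 + A * lam + B = 0)
    (hmu : mu ^ 2 + A * mu + B = 0) (hne : lam ≠ mu) : lam + mu = -A ∧ lam * mu = B := by
  have hsum : lam + mu = -A := by
    have h : (lam - mu) * (lam + mu + A) = 0 := by linear_combination hlam - hmu
    linear_combination (mul_eq_zero.mp h).resolve_left (sub_ne_zero.mpr hne)
  exact ⟨hsum, by linear_combination lam * hsum - hlam⟩

theorem eq_or_eq_of_quadratic (hlam : lam ^ 2 + A * lam + B = 0)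
    (hmu : mu ^ 2 + A * mu + B = 0) (hne : lam ≠ mu) {x : F} (hx : x ^ 2 + A * x + B = 0) :
    x = lam ∨ x = mu := by
  obtain ⟨hsum, hprod⟩ := add_eq_neg_and_mul_eq_of_quadratic hlam hmu hne
  have h : (x - lam) * (x - mu) = 0 := by linear_combination hx - x * hsum + hprod
  simpa [sub_eq_zero] using h

theorem pow_add_pow_eq_zero_of_orderOf_div {k : ℕ} (hk : orderOf (lam / mu) = k + k) (hk0 : 0 < k)
    (hmu : mu ≠ 0) : lam ^ k + mu ^ k = 0 := by
  have hprim : IsPrimitiveRoot ((lam / mu) ^ k) 2 := by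
    have := (IsPrimitiveRoot.orderOf (lam / mu)).pow_of_dvd hk0.ne'
      (by rw [hk]; exact ⟨2, by ring⟩)
    rwa [hk, ← two_mul, Nat.mul_div_cancel _ hk0] at this
  have h := hprim.eq_neg_one_of_two_right
  rw [div_pow, div_eq_iff (pow_ne_zero k hmu)] at h
  linear_combination h

theorem exists_pow_add_pow_eq_zero_of_even_orderOf_div {p : ℕ} (hp : 2 ≤ p)
    (hlam : lam ^ p = mu) (hmu : mu ^ p = lam) (hmu0 : mu ≠ 0)
    (heven : Even (orderOf (lam / mu))) :
    ∃ k ∈ Icc 1 (p - 1), lam ^ k + mu ^ k = 0 := by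
  have hlam0 : lam ≠ 0 := fun h => hmu0 (by rw [← hlam, h, zero_pow (by omega)])
  have hpow : (lam / mu) ^ (p + 1) = 1 := by
    rw [div_pow, pow_succ, pow_succ, hlam, hmu, mul_comm, div_self (mul_ne_zero hlam0 hmu0)]
  have hdvd := orderOf_dvd_of_pow_eq_one hpow
  have hpos := (isOfFinOrder_iff_pow_eq_one.mpr ⟨p + 1, by omega, hpow⟩).orderOf_pos
  obtain ⟨k, hk⟩ := heven
  have hle := Nat.le_of_dvd (by omega) hdvd
  have h2 : 2 ∣ p + 1 := dvd_trans ⟨k, by omega⟩ hdvd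
  have hk0 : 0 < k := by omega
  exact ⟨k, mem_Icc.mpr ⟨hk0, by omega⟩, pow_add_pow_eq_zero_of_orderOf_div hk hk0 hmu0⟩

end RootPair

theorem ZMod.pow_card_sub_two_eq_inv {p : ℕ} [Fact p.Prime] {x : ZMod p} (hx : x ≠ 0) :
    x ^ (p - 2) = x⁻¹ := by
  refine eq_inv_of_mul_eq_one_left ?_
  have hp := (Fact.out : p.Prime).two_le
  rw [← pow_succ, show p - 2 + 1 = p - 1 by omega, ZMod.pow_card_sub_one_eq_one hx]

section PrimeField

variable {p : ℕ} [Fact p.Prime] {K : Type*} [Field K] [CharP K p]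

local notation "φ" => ZMod.castHom (dvd_refl p) K

theorem exists_castHom_eq_of_pow_char_eq_self {x : K} (hx : x ^ p = x) :
    ∃ c : ZMod p, φ c = x := by
  rw [← RingHom.mem_fieldRange, ZMod.fieldRange_castHom_eq_bot p]
  exact (Subfield.mem_bot_iff_pow_eq_self K p).mpr hx

theorem castHom_pow_char (c : ZMod p) : φ c ^ p = φ c := by
  rw [← map_pow, ZMod.pow_card]

theorem castHom_units_pow_card_sub_one (j : (ZMod p)ˣ) : φ j ^ (p - 1) = 1 := by
  rw [← map_pow, ZMod.pow_card_sub_one_eq_one j.ne_zero, map_one]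

theorem sum_units_castHom_pow (s : ℕ) :
    ∑ j : (ZMod p)ˣ, φ j ^ s = if p - 1 ∣ s then -1 else 0 := by
  classical
  have h := FiniteField.sum_pow_units (ZMod p) s
  rw [ZMod.card] at h
  simp_rw [← map_pow, ← map_sum, h]
  split_ifs <;> simp

theorem pow_char_eq_of_quadratic {a b : ZMod p} (hirr : ∀ x : ZMod p, x ^ 2 + a * x + b ≠ 0)
    {lam mu : K} (hlam : lam ^ 2 + φ a * lam + φ b = 0) (hmu : mu ^ 2 + φ a * mu + φ b = 0)
    (hne : lam ≠ mu) : lam ^ p = mu := by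
  have hroot : (lam ^ p) ^ 2 + φ a * lam ^ p + φ b = 0 := by
    rw [← castHom_pow_char a, ← castHom_pow_char b, ← mul_pow, pow_right_comm, ← add_pow_char,
      ← add_pow_char, hlam, zero_pow (Fact.out : p.Prime).ne_zero]
  refine (eq_or_eq_of_quadratic hlam hmu hne hroot).resolve_left fun hfix => ?_
  obtain ⟨c, rfl⟩ := exists_castHom_eq_of_pow_char_eq_self hfix
  exact hirr c ((φ).injective (by simpa using hlam))

theorem castHom_sub_mul_ne_zero {ν : K} (hν : ν ^ (p - 1) ≠ 1) (i j : (ZMod p)ˣ) :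
    φ i - ν * φ j ≠ 0 := by
  intro h
  have := congrArg (· ^ (p - 1)) (sub_eq_zero.mp h)
  simp only [mul_pow, castHom_units_pow_card_sub_one, mul_one] at this
  exact hν this.symm

theorem sum_units_pow_div_one_sub_mul {ν : K} (hν : ν ^ (p - 1) ≠ 1) {u w : ℕ}
    (huw : u + w + 2 = p) :
    ∑ t : (ZMod p)ˣ, φ t ^ (u + 1) / (1 - ν * φ t) = -ν ^ w / (1 - ν ^ (p - 1)) := by
  have hgeom : ∀ t : (ZMod p)ˣ, φ t ^ (u + 1) / (1 - ν * φ t)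
      = (∑ m ∈ range (p - 1), ν ^ m * φ t ^ (u + 1 + m)) / (1 - ν ^ (p - 1)) := by
    intro t
    have ht : 1 - ν * φ t ≠ 0 := by simpa using castHom_sub_mul_ne_zero hν 1 t
    have h := mul_neg_geom_sum (ν * φ t) (p - 1)
    rw [mul_pow, castHom_units_pow_card_sub_one, mul_one] at h
    rw [div_eq_div_iff ht (sub_ne_zero.mpr hν.symm), ← h, mul_sum, mul_sum, sum_mul]
    exact sum_congr rfl fun m _ => by ring
  have hexp : ∀ m ∈ range (p - 1), (p - 1 ∣ u + 1 + m ↔ m = w) := by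
    intro m hm
    rw [mem_range] at hm
    constructor
    · intro hdvd
      have := Nat.eq_of_dvd_of_lt_two_mul (by omega) hdvd (by omega)
      omega
    · rintro rfl
      exact ⟨1, by omega⟩
  calc ∑ t : (ZMod p)ˣ, φ t ^ (u + 1) / (1 - ν * φ t)
      = (∑ m ∈ range (p - 1), ν ^ m * ∑ t : (ZMod p)ˣ, φ t ^ (u + 1 + m))
          / (1 - ν ^ (p - 1)) := by
        simp_rw [hgeom, ← sum_div, mul_sum]
        rw [sum_comm]
    _ = (∑ m ∈ range (p - 1), if m = w then -ν ^ m else 0) / (1 - ν ^ (p - 1)) := by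
        congr 1
        refine sum_congr rfl fun m hm => ?_
        rw [sum_units_castHom_pow, if_congr (hexp m hm) rfl rfl]
        split_ifs <;> simp
    _ = -ν ^ w / (1 - ν ^ (p - 1)) := by
        rw [sum_ite_eq', if_pos (mem_range.mpr (by omega))]

theorem sum_units_pow_div_sub_mul {ν : K} (hν : ν ^ (p - 1) ≠ 1) {u w : ℕ}
    (huw : u + w + 2 = p) (i : (ZMod p)ˣ) :
    ∑ j : (ZMod p)ˣ, φ j ^ (u + 1) / (φ i - ν * φ j)
      = -φ i ^ u * ν ^ w / (1 - ν ^ (p - 1)) := by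
  have hi : φ i ≠ 0 := (map_ne_zero _).mpr i.ne_zero
  rw [← Equiv.sum_comp (Equiv.mulLeft i)]
  have h : ∀ t : (ZMod p)ˣ, φ ↑(i * t) ^ (u + 1) / (φ i - ν * φ ↑(i * t))
      = φ i ^ u * (φ t ^ (u + 1) / (1 - ν * φ t)) := by
    intro t
    rw [Units.val_mul, map_mul]
    field_simp
    ring
  simp only [Equiv.coe_mulLeft, h, ← mul_sum, sum_units_pow_div_one_sub_mul hν huw]
  ring

theorem castHom_quadForm_pow_card_sub_two {a b : ZMod p} {lam mu : K}
    (hsum : lam + mu = -φ a) (hprod : lam * mu = φ b) (hlam : lam ^ (p - 1) ≠ 1)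
    (hmu : mu ^ (p - 1) ≠ 1) (i j : (ZMod p)ˣ) :
    φ (((i : ZMod p) ^ 2 + a * (i : ZMod p) * (j : ZMod p) + b * (j : ZMod p) ^ 2) ^ (p - 2))
      = ((φ i - lam * φ j) * (φ i - mu * φ j))⁻¹ := by
  have hQ : φ ((i : ZMod p) ^ 2 + a * (i : ZMod p) * (j : ZMod p) + b * (j : ZMod p) ^ 2)
      = (φ i - lam * φ j) * (φ i - mu * φ j) := by
    simp only [map_add, map_mul, map_pow]
    linear_combination (φ i * φ j) * hsum - φ j ^ 2 * hprod
  have hQ0 : (i : ZMod p) ^ 2 + a * (i : ZMod p) * (j : ZMod p) + b * (j : ZMod p) ^ 2 ≠ 0 := by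
    intro h
    rw [h, map_zero] at hQ
    exact mul_ne_zero (castHom_sub_mul_ne_zero hlam i j) (castHom_sub_mul_ne_zero hmu i j) hQ.symm
  rw [ZMod.pow_card_sub_two_eq_inv hQ0, map_inv₀, hQ]

theorem det_eq_zero_of_pow_add_pow_eq_zero {a b : ZMod p} {lam mu : K}
    (hsum : lam + mu = -φ a) (hprod : lam * mu = φ b) (hlam : lam ^ p = mu) (hmu : mu ^ p = lam)
    (hne : lam ≠ mu) {u w : ℕ} (huw : u + w + 2 = p) (hkey : lam ^ (w + 1) + mu ^ (w + 1) = 0) :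
    (Matrix.of fun i j : (ZMod p)ˣ =>
      ((i : ZMod p) ^ 2 + a * (i : ZMod p) * (j : ZMod p) + b * (j : ZMod p) ^ 2) ^ (p - 2)).det
      = 0 := by
  have hp : p - 1 + 1 = p := by omega
  have hlm : lam - mu ≠ 0 := sub_ne_zero.mpr hne
  have hlam0 : lam ≠ 0 := fun h => hne (by rw [← hlam, h, zero_pow (by omega)])
  have hmu0 : mu ≠ 0 := fun h => hne (by rw [← hmu, h, zero_pow (by omega)])
  have hlam_mul : lam * lam ^ (p - 1) = mu := by rw [← pow_succ', hp, hlam]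
  have hmu_mul : mu * mu ^ (p - 1) = lam := by rw [← pow_succ', hp, hmu]
  have hlam1 : lam ^ (p - 1) ≠ 1 := fun h => hne (by rw [← hlam_mul, h, mul_one])
  have hmu1 : mu ^ (p - 1) ≠ 1 := fun h => hne (by rw [← hmu_mul, h, mul_one])
  have hpartial : ∀ i j : (ZMod p)ˣ,
      ((φ i - lam * φ j) * (φ i - mu * φ j))⁻¹ * φ j ^ (u + 2)
        = (lam - mu)⁻¹ * (φ j ^ (u + 1) / (φ i - lam * φ j)
          - φ j ^ (u + 1) / (φ i - mu * φ j)) := by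
    intro i j
    rw [div_sub_div _ _ (castHom_sub_mul_ne_zero hlam1 i j) (castHom_sub_mul_ne_zero hmu1 i j),
      show φ j ^ (u + 1) * (φ i - mu * φ j) - (φ i - lam * φ j) * φ j ^ (u + 1)
        = (lam - mu) * φ j ^ (u + 2) by ring,
      mul_div_assoc, inv_mul_cancel_left₀ hlm, div_eq_inv_mul]
  have hlam_sub : 1 - lam ^ (p - 1) = (lam - mu) / lam := by
    field_simp
    linear_combination -hlam_mul
  have hmu_sub : 1 - mu ^ (p - 1) = (mu - lam) / mu := by
    field_simp
    linear_combination -hmu_mul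
  apply (φ).injective
  rw [map_zero, RingHom.map_det, ← Matrix.exists_mulVec_eq_zero_iff]
  refine ⟨fun j => φ j ^ (u + 2), fun h => by simpa using congrFun h 1, ?_⟩
  ext i
  simp only [Matrix.mulVec, dotProduct, RingHom.mapMatrix_apply, Matrix.map_apply, Matrix.of_apply,
    castHom_quadForm_pow_card_sub_two hsum hprod hlam1 hmu1, hpartial, ← mul_sum,
    sum_sub_distrib, sum_units_pow_div_sub_mul hlam1 huw, sum_units_pow_div_sub_mul hmu1 huw,
    Pi.zero_apply]
  rw [hlam_sub, hmu_sub, div_div_eq_mul_div, div_div_eq_mul_div, ← neg_sub lam mu, div_neg,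
    sub_neg_eq_add, ← add_div, mul_div_assoc', div_eq_zero_iff]
  left
  linear_combination (-(lam - mu)⁻¹ * φ i ^ u) * hkey

end PrimeField

theorem stmt4_general (p : ℕ) [Fact p.Prime] (a b : ZMod p)
    (K : Type*) [Field K] [CharP K p]
    (hirr : ∀ x : ZMod p, x ^ 2 + a * x + b ≠ 0)
    (lam mu : K)
    (hlam : lam ^ 2 + ZMod.castHom (dvd_refl p) K a * lam + ZMod.castHom (dvd_refl p) K b = 0)
    (hmu : mu ^ 2 + ZMod.castHom (dvd_refl p) K a * mu + ZMod.castHom (dvd_refl p) K b = 0)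
    (heven : Even (orderOf (lam / mu))) :
    (∏ m ∈ Finset.Icc 1 (p - 1), (lam ^ m + mu ^ m)) = 0 ∧
      Matrix.det (Matrix.of fun i j : (ZMod p)ˣ =>
          ((i : ZMod p) ^ 2 + a * (i : ZMod p) * (j : ZMod p) + b * (j : ZMod p) ^ 2) ^ (p - 2))
        = 0 := by
  have hmu0 : mu ≠ 0 := by
    rintro rfl
    exact hirr 0 ((ZMod.castHom (dvd_refl p) K).injective (by simpa using hmu))
  have hne : lam ≠ mu := by
    rintro rfl
    rw [div_self hmu0, orderOf_one] at heven
    exact Nat.not_even_one heven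
  obtain ⟨hsum, hprod⟩ := add_eq_neg_and_mul_eq_of_quadratic hlam hmu hne
  have hlam_pow := pow_char_eq_of_quadratic hirr hlam hmu hne
  have hmu_pow := pow_char_eq_of_quadratic hirr hmu hlam hne.symm
  obtain ⟨k, hk, hkey⟩ := exists_pow_add_pow_eq_zero_of_even_orderOf_div
    (Fact.out : p.Prime).two_le hlam_pow hmu_pow hmu0 heven
  refine ⟨prod_eq_zero hk hkey, ?_⟩
  obtain ⟨hk1, hkp⟩ := mem_Icc.mp hk
  obtain ⟨w, rfl⟩ : ∃ w, k = w + 1 := ⟨k - 1, by omega⟩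
  exact det_eq_zero_of_pow_add_pow_eq_zero hsum hprod hlam_pow hmu_pow hne
    (u := p - 2 - w) (by omega) hkey

/-- With `q(X)=X²+aX+b` irreducible over `𝔽_p`, roots `λ, μ`, `R = λ/μ`:
if the multiplicative order of `R` is even, then `∏_{m=1}^{p-1}(λ^m+μ^m) = 0`,
hence `det[(i²+aij+bj²)^{p-2}] ≡ 0 (mod p)`. -/
theorem stmt4 (p : ℕ) [Fact p.Prime] (hodd : p ≠ 2) (a b : ZMod p) (hb : b ≠ 0)
    (K : Type*) [Field K] [CharP K p]
    (hirr : ∀ x : ZMod p, x ^ 2 + a * x + b ≠ 0)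
    (lam mu : K)
    (hlam : lam ^ 2 + ZMod.castHom (dvd_refl p) K a * lam + ZMod.castHom (dvd_refl p) K b = 0)
    (hmu : mu ^ 2 + ZMod.castHom (dvd_refl p) K a * mu + ZMod.castHom (dvd_refl p) K b = 0)
    (hne : lam ≠ mu)
    (heven : Even (orderOf (lam / mu))) :
    (∏ m ∈ Finset.Icc 1 (p - 1), (lam ^ m + mu ^ m)) = 0 ∧
      Matrix.det (Matrix.of fun i j : (ZMod p)ˣ =>
          ((i : ZMod p) ^ 2 + a * (i : ZMod p) * (j : ZMod p) + b * (j : ZMod p) ^ 2) ^ (p - 2))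
        = 0 :=
  stmt4_general p a b K hirr lam mu hlam hmu heven
end

section
/- Let p ≡ 5 (mod 24) be prime and let λ, μ be the roots of X^2+6X+6 over F_p (irreducible) in F_{p^2}. Then the multiplicative order of R = λ/μ is odd. -/
/-! Vieta gives `λ + μ = -6` and `λ μ = 6`. Since `p ≡ 5 (mod 24)`, both `2` and `3` are
non-squares mod `p`, so `3^((p-1)/2) = -1` and `6^((p-1)/2) = 1` by Euler's criterion.
As `(λ + 3)² = 3`, the first makes Frobenius send `λ + 3` to `-(λ + 3)`, i.e. `λ^p = μ`. Then
`λ/μ = λ²/6` and `(λ/μ)^((p+1)/2) = λ^(p+1) / 6^((p+1)/2) = λμ/6 = 1`, and `(p+1)/2` is odd. -/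

namespace ZMod

variable {p : ℕ} [Fact p.Prime]

theorem pow_div_two_eq_neg_one_of_not_isSquare {a : ZMod p} (ha : ¬IsSquare a) :
    a ^ (p / 2) = -1 := by
  have ha0 : a ≠ 0 := by rintro rfl; exact ha IsSquare.zero
  exact (pow_div_two_eq_neg_one_or_one p ha0).resolve_left (mt (euler_criterion p ha0).mpr ha)

theorem two_pow_div_two_of_mod_eight_eq_five (hp : p % 8 = 5) : (2 : ZMod p) ^ (p / 2) = -1 :=
  pow_div_two_eq_neg_one_of_not_isSquare <| by rw [exists_sq_eq_two_iff (by omega)]; omega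

theorem three_pow_div_two_of_mod_twelve_eq_five (hp : p % 12 = 5) :
    (3 : ZMod p) ^ (p / 2) = -1 := by
  apply pow_div_two_eq_neg_one_of_not_isSquare
  have hp3 : (p : ZMod 3) = 2 := by rw [← ZMod.natCast_mod, show p % 3 = 2 by omega]; rfl
  have h := exists_sq_eq_prime_iff_of_mod_four_eq_one (p := p) (q := 3) (by omega) (by norm_num)
  rw [Nat.cast_ofNat, hp3] at h
  exact h.not.mpr (by decide)

theorem six_pow_div_two_of_mod_twentyfour_eq_five (hp : p % 24 = 5) :
    (6 : ZMod p) ^ (p / 2) = 1 := by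
  rw [show (6 : ZMod p) = 2 * 3 by norm_num, mul_pow, two_pow_div_two_of_mod_eight_eq_five (by omega),
    three_pow_div_two_of_mod_twelve_eq_five (by omega)]
  norm_num

end ZMod

section CharP

variable {p : ℕ} {K : Type*} [Field K] [CharP K p]

theorem ofNat_pow_eq_castHom (n m : ℕ) [n.AtLeastTwo] :
    (OfNat.ofNat n : K) ^ m = ZMod.castHom (dvd_refl p) K ((OfNat.ofNat n : ZMod p) ^ m) := by
  rw [map_pow, map_ofNat]

variable [Fact p.Prime]

theorem pow_char_eq_neg_of_sq_eq_three (hp : p % 12 = 5) {x : K} (hx : x ^ 2 = 3) : x ^ p = -x := by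
  have hp' : p = 2 * (p / 2) + 1 := by omega
  rw [hp', pow_succ, pow_mul, hx, ofNat_pow_eq_castHom, ZMod.three_pow_div_two_of_mod_twelve_eq_five hp]
  simp

theorem pow_char_add_add_six_eq_zero (hp : p % 12 = 5) {x : K} (hx : x ^ 2 + 6 * x + 6 = 0) :
    x ^ p + x + 6 = 0 := by
  have hfrob : (x + 3) ^ p = -(x + 3) :=
    pow_char_eq_neg_of_sq_eq_three hp (by linear_combination hx)
  have h3 : (3 : K) ^ p = 3 := frobenius_def p (3 : K) ▸ map_ofNat (frobenius K p) 3
  rw [add_pow_char, h3] at hfrob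
  linear_combination hfrob

end CharP

/-- For `p ≡ 5 (mod 24)`, the roots `λ, μ` of `X²+6X+6` in `𝔽_{p²}` have `λ/μ` of odd
multiplicative order. -/
theorem stmt7 (p : ℕ) [Fact p.Prime] (hp : p % 24 = 5)
    (K : Type*) [Field K] [CharP K p]
    (lam mu : K)
    (hlam : lam ^ 2 + 6 * lam + 6 = 0) (hmu : mu ^ 2 + 6 * mu + 6 = 0)
    (hne : lam ≠ mu) :
    Odd (orderOf (lam / mu)) := by
  have hsum : lam + mu + 6 = 0 := by
    have : (lam - mu) * (lam + mu + 6) = 0 := by linear_combination hlam - hmu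
    exact (mul_eq_zero.mp this).resolve_left (sub_ne_zero.mpr hne)
  have hprod : lam * mu = 6 := by linear_combination lam * hsum - hlam
  have hfrob : lam ^ p = mu := by
    linear_combination pow_char_add_add_six_eq_zero (by omega) hlam - hsum
  have h6 : (6 : K) ^ (p / 2) = 1 := by
    rw [ofNat_pow_eq_castHom, ZMod.six_pow_div_two_of_mod_twentyfour_eq_five hp, map_one]
  have h6ne : (6 : K) ≠ 0 := by rintro h; simp [h, show p / 2 ≠ 0 by omega] at h6
  have hlam0 : lam ≠ 0 := by rintro rfl; exact h6ne (by simpa using hprod.symm)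
  set k := p / 2
  have hp' : p = 2 * k + 1 := by omega
  have key : (lam / mu) ^ ((p + 1) / 2) = 1 := calc
    (lam / mu) ^ ((p + 1) / 2) = (lam ^ 2 / 6) ^ (k + 1) := by
      rw [← hprod, sq, mul_div_mul_left _ _ hlam0, show (p + 1) / 2 = k + 1 by omega]
    _ = lam ^ (2 * k + 1) * lam / (6 ^ k * 6) := by rw [div_pow, ← pow_mul, pow_succ (6 : K)]; ring
    _ = 1 := by rw [← hp', h6, hfrob, one_mul, mul_comm, hprod, div_self h6ne]
  exact Odd.of_dvd_nat (Nat.odd_iff.mpr (by omega)) (orderOf_dvd_of_pow_eq_one key)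
end

section
/- Let A = (a_{ij}) be an n×n matrix over a commutative ring with all diagonal entries zero. Then the permanent of I_n + A equals the sum over all permutations τ of {1,...,n} of the product of a_{j,τ(j)} over the non-fixed points j of τ. -/
/-- The permanent of a square matrix. -/
def permanent {n : Type*} [Fintype n] [DecidableEq n] {R : Type*} [CommRing R]
    (M : Matrix n n R) : R :=
  ∑ σ : Equiv.Perm n, ∏ i, M i (σ i)

namespace Matrix

variable {n R : Type*} [DecidableEq n] {A : Matrix n n R}

theorem one_add_apply_of_diag_eq_zero [AddMonoidWithOne R] (hdiag : ∀ i, A i i = 0)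
    (i j : n) : (1 + A) i j = if j ≠ i then A i j else 1 := by
  by_cases hji : j = i
  · subst hji
    simp [hdiag]
  · simp [one_apply_ne' hji, hji]

theorem prod_one_add_apply_perm_of_diag_eq_zero [Fintype n] [CommSemiring R]
    (hdiag : ∀ i, A i i = 0) (σ : Equiv.Perm n) :
    ∏ i, (1 + A) i (σ i) = ∏ j ∈ Finset.univ.filter (fun j => σ j ≠ j), A j (σ j) := by
  rw [Finset.prod_filter]
  exact Finset.prod_congr rfl fun i _ => one_add_apply_of_diag_eq_zero hdiag i (σ i)

end Matrix

/-- If `A` has zero diagonal, then `per(I + A)` is the sum over all permutations `τ` of the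
product of `a_{j,τ(j)}` over the non-fixed points `j` of `τ`. -/
theorem stmt8 {R : Type*} [CommRing R] (n : ℕ) (A : Matrix (Fin n) (Fin n) R)
    (hdiag : ∀ i, A i i = 0) :
    permanent (1 + A) =
      ∑ τ : Equiv.Perm (Fin n),
        ∏ j ∈ Finset.univ.filter (fun j => τ j ≠ j), A j (τ j) :=
  Finset.sum_congr rfl fun τ _ => Matrix.prod_one_add_apply_perm_of_diag_eq_zero hdiag τ
end

section
/- Let x_1, ..., x_s (s ≥ 3) be pairwise distinct elements of a field. Then the sum over all oriented s-cycles (i_1,...,i_s) on {1,...,s} (taken modulo cyclic rotation) of the product over r of 1/(x_{i_r} - x_{i_{r+1}}) (indices cyclic) equals 0. -/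
/-!
Fix a point `p`. Every cycle through all points arises exactly once by inserting `p` right after
some `a` into a cycle `τ` on the remaining points, i.e. as `swap p (τ a) * τ`; removing `p` again
leaves a cycle because `s ≥ 3`. The insertion multiplies the product attached to `τ` by
`(x a - x (τ a)) / ((x a - x p) * (x p - x (τ a))) = 1 / (x p - x (τ a)) - 1 / (x p - x a)`,
and the sum of these differences over `a` vanishes because `τ` permutes its support.
-/

open scoped Classical

open Finset

namespace Equiv.Perm

variable {α : Type*}

theorem IsCycle.apply_apply_ne_self [Fintype α] [DecidableEq α] {f : Perm α} (hf : IsCycle f)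
    (hcard : 3 ≤ #f.support) {x : α} (hx : f x ≠ x) : f (f x) ≠ x := by
  intro hffx
  have hsq : f ^ 2 = 1 := hf.pow_eq_one_iff.2 ⟨x, hx, by rwa [pow_two, mul_apply]⟩
  have := orderOf_le_of_pow_eq_one two_pos hsq
  rw [hf.orderOf] at this
  omega

-- The `g`-path from `y` to `a` only passes through points where `f` and `g` agree.
theorem SameCycle.of_apply_eq_of_ne [Finite α] {f g : Perm α} {y a : α}
    (hfg : ∀ z, g z ≠ z → z ≠ a → f z = g z) (h : g.SameCycle y a) : f.SameCycle y a := by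
  obtain ⟨k, -, hk⟩ := h.exists_pow_eq'
  clear h
  induction k generalizing y with
  | zero => rw [← hk]; rfl
  | succ k ih =>
    by_cases hya : y = a
    · rw [hya]
    have hgy : g y ≠ y := fun hgy => hya (hk ▸ (pow_apply_eq_self_of_apply_eq_self hgy _).symm)
    rw [pow_succ, mul_apply] at hk
    exact (sameCycle_apply_right.2 (SameCycle.refl f y)).trans (hfg y hgy hya ▸ ih hk)

variable [DecidableEq α]

theorem swap_apply_mul_eq_mul_swap {τ : Perm α} {p : α} (hp : τ p = p) (a : α) :
    swap p (τ a) * τ = τ * swap p a := by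
  rw [mul_swap_eq_swap_mul, hp]

variable [Fintype α]

theorem IsCycle.swap_apply_mul {τ : Perm α} (hτ : IsCycle τ) {p a : α} (hp : τ p = p)
    (ha : τ a ≠ a) : IsCycle (swap p (τ a) * τ) := by
  have hap : a ≠ p := fun h => ha (h ▸ hp)
  rw [swap_apply_mul_eq_mul_swap hp]
  have hσa : (τ * swap p a) a = p := by simp [hp]
  refine ⟨a, by rwa [hσa, ne_comm], fun y hy => ?_⟩
  by_cases hyp : y = p
  · rw [hyp]
    have := sameCycle_apply_right.2 (SameCycle.refl (τ * swap p a) a)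
    rwa [hσa] at this
  have hτy : τ y ≠ y := by
    by_cases hya : y = a
    · rwa [hya]
    · rwa [mul_apply, swap_apply_of_ne_of_ne hyp hya] at hy
  refine (SameCycle.of_apply_eq_of_ne (fun z hz hza => ?_) (hτ.sameCycle hτy ha)).symm
  have hzp : z ≠ p := fun h => hz (h ▸ hp)
  rw [mul_apply, swap_apply_of_ne_of_ne hzp hza]

theorem support_swap_apply_mul {τ : Perm α} {p a : α} (hp : τ p = p) (ha : τ a ≠ a) :
    (swap p (τ a) * τ).support = insert p τ.support := by
  have hap : a ≠ p := fun h => ha (h ▸ hp)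
  have hτap : τ a ≠ p := hp ▸ τ.injective.ne hap
  rw [swap_apply_mul_eq_mul_swap hp]
  ext y
  by_cases hyp : y = p
  · simp [hyp, hp, hτap]
  by_cases hya : y = a
  · simp [hya, hp, hap.symm, ha]
  · simp [mem_support, swap_apply_of_ne_of_ne hyp hya, hyp]

noncomputable def cyclesWithSupport (s : Finset α) : Finset (Perm α) :=
  {σ | σ.IsCycle ∧ σ.support = s}

theorem mem_cyclesWithSupport {σ : Perm α} {s : Finset α} :
    σ ∈ cyclesWithSupport s ↔ σ.IsCycle ∧ σ.support = s := by
  simp [cyclesWithSupport]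

theorem sum_cyclesWithSupport_insert {M : Type*} [AddCommMonoid M] (f : Perm α → M) {p : α}
    {s : Finset α} (hp : p ∉ s) (hs : 2 ≤ #s) :
    ∑ σ ∈ cyclesWithSupport (insert p s), f σ =
      ∑ τ ∈ cyclesWithSupport s, ∑ a ∈ s, f (swap p (τ a) * τ) := by
  have insert_remove (σ : Perm α) :
      swap p ((swap p (σ p) * σ) (σ⁻¹ p)) * (swap p (σ p) * σ) = σ := by
    simp [mul_apply, swap_mul_self_mul]
  rw [← sum_product']
  refine sum_bij' (fun σ _ => (swap p (σ p) * σ, σ⁻¹ p)) (fun q _ => swap p (q.1 q.2) * q.1)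
    ?_ ?_ (fun σ _ => insert_remove σ) ?_ (fun σ _ => by rw [insert_remove])
  · intro σ hσ
    obtain ⟨hc, hsupp⟩ := mem_cyclesWithSupport.1 hσ
    have hσp : σ p ≠ p := mem_support.1 (hsupp ▸ mem_insert_self p s)
    have hσσp : σ (σ p) ≠ p := hc.apply_apply_ne_self
      (by rw [hsupp, card_insert_of_notMem hp]; omega) hσp
    refine mem_product.2 ⟨mem_cyclesWithSupport.2 ⟨hc.swap_mul hσp hσσp, ?_⟩, ?_⟩
    · rw [support_swap_mul_eq _ _ hσσp, hsupp, sdiff_singleton_eq_erase, erase_insert hp]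
    · have hinv : σ⁻¹ p ≠ p := fun h => hσp (inv_eq_iff_eq.1 h).symm
      have : σ⁻¹ p ∈ insert p s := hsupp ▸ mem_support.2
        (by rwa [← mul_apply, mul_inv_cancel, one_apply, ne_comm])
      exact (mem_insert.1 this).resolve_left hinv
  · rintro ⟨τ, a⟩ hq
    obtain ⟨hτ, ha⟩ := mem_product.1 hq
    obtain ⟨hc, hsupp⟩ := mem_cyclesWithSupport.1 hτ
    have hτp : τ p = p := notMem_support.1 (hsupp ▸ hp)
    have hτa : τ a ≠ a := mem_support.1 (hsupp ▸ ha)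
    exact mem_cyclesWithSupport.2
      ⟨hc.swap_apply_mul hτp hτa, by rw [support_swap_apply_mul hτp hτa, hsupp]⟩
  · rintro ⟨τ, a⟩ hq
    obtain ⟨hτ, ha⟩ := mem_product.1 hq
    have hτp : τ p = p := notMem_support.1 ((mem_cyclesWithSupport.1 hτ).2 ▸ hp)
    have hσp : (swap p (τ a) * τ) p = τ a := by simp [hτp]
    have hσa : (swap p (τ a) * τ) a = p := by simp
    exact Prod.ext (by simp only [hσp, swap_mul_self_mul]) (inv_eq_iff_eq.2 hσa.symm)

theorem prod_inv_sub_swap_apply_mul {K : Type*} [Field K] {x : α → K}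
    (hx : Function.Injective x) {τ : Perm α} {p a : α} (hp : τ p = p) (ha : τ a ≠ a) :
    ∏ r ∈ insert p τ.support, (x r - x ((swap p (τ a) * τ) r))⁻¹ =
      (∏ r ∈ τ.support, (x r - x (τ r))⁻¹) *
        ((x p - x (τ a))⁻¹ - (x p - x a)⁻¹) := by
  have hap : a ≠ p := fun h => ha (h ▸ hp)
  have hτap : τ a ≠ p := hp ▸ τ.injective.ne hap
  have haτ : a ∈ τ.support := mem_support.2 ha
  have hσr : ∀ r ∈ τ.support.erase a, (swap p (τ a) * τ) r = τ r := fun r hr => by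
    have hrp : r ≠ p := fun h => (mem_support.1 (mem_of_mem_erase hr)) (h ▸ hp)
    rw [swap_apply_mul_eq_mul_swap hp, mul_apply, swap_apply_of_ne_of_ne hrp (ne_of_mem_erase hr)]
  rw [prod_insert (notMem_support.2 hp), ← mul_prod_erase _ _ haτ,
    ← mul_prod_erase τ.support _ haτ, prod_congr rfl fun r hr => by rw [hσr r hr]]
  simp only [mul_apply, hp, swap_apply_left, swap_apply_right]
  have hxap : x a - x p ≠ 0 := sub_ne_zero.2 (hx.ne hap)
  have hxpτ : x p - x (τ a) ≠ 0 := sub_ne_zero.2 (hx.ne hτap.symm)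
  have hxaτ : x a - x (τ a) ≠ 0 := sub_ne_zero.2 (hx.ne ha.symm)
  have hxpa : x p - x a ≠ 0 := sub_ne_zero.2 (hx.ne hap.symm)
  field_simp
  ring

end Equiv.Perm

open Equiv Perm

/-- For pairwise distinct `x_1, …, x_s` (`s ≥ 3`) in a field, the sum over all `s`-cycles `σ`
of `∏_r 1/(x_r - x_{σ(r)})` vanishes. -/
theorem stmt9 (K : Type*) [Field K] (s : ℕ) (hs : 3 ≤ s)
    (x : Fin s → K) (hx : Function.Injective x) :
    ∑ σ ∈ Finset.univ.filter
        (fun σ : Equiv.Perm (Fin s) => σ.IsCycle ∧ σ.support = Finset.univ),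
      ∏ r, (x r - x (σ r))⁻¹ = 0 := by
  set p : Fin s := ⟨0, by omega⟩
  have hcycles : univ.filter (fun σ : Perm (Fin s) => σ.IsCycle ∧ σ.support = univ) =
      cyclesWithSupport (insert p (univ.erase p)) := by
    rw [insert_erase (mem_univ p)]; rfl
  rw [hcycles, sum_cyclesWithSupport_insert _ (notMem_erase p univ)
    (by rw [card_erase_of_mem (mem_univ p), card_univ, Fintype.card_fin]; omega)]
  refine sum_eq_zero fun τ hτ => ?_
  obtain ⟨-, hsupp⟩ := mem_cyclesWithSupport.1 hτ
  have hp : τ p = p := notMem_support.1 (hsupp ▸ notMem_erase p univ)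
  calc ∑ a ∈ univ.erase p, ∏ r, (x r - x ((swap p (τ a) * τ) r))⁻¹
      = ∑ a ∈ τ.support, (∏ r ∈ τ.support, (x r - x (τ r))⁻¹) *
          ((x p - x (τ a))⁻¹ - (x p - x a)⁻¹) := by
        rw [← hsupp]
        refine sum_congr rfl fun a ha => ?_
        rw [← prod_inv_sub_swap_apply_mul hx hp (mem_support.1 ha), hsupp,
          insert_erase (mem_univ p)]
    _ = (∏ r ∈ τ.support, (x r - x (τ r))⁻¹) *
          ∑ a ∈ τ.support, ((x p - x (τ a))⁻¹ - (x p - x a)⁻¹) := (mul_sum ..).symm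
    _ = 0 := by
        rw [sum_sub_distrib, τ.sum_comp _ (fun a => (x p - x a)⁻¹)
          (coe_support_eq_set_support τ).symm.subset, sub_self, mul_zero]
end

section
/- For every odd prime p and every t ∈ F_p, det(I_{p-1} + t C_p) = 1 + t^{p-1} in F_p, where C_p has zero diagonal and (i,j) entry (i-j)^{-1}. -/
/-!
Let `x` enumerate `𝔽_q^×` (for `stmt15`, `x i = i + 1` in `𝔽_p`) and let `V i k = x i ^ k` be
its Vandermonde matrix. Substituting `u = x i - y` and using
`∑_{u ∈ 𝔽_q} u⁻¹ (x - u) ^ k = k x ^ (k - 1)` for `k ≤ q - 2` gives `C V = V N`, where `N` is the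
matrix of the operator `X ^ k ↦ k X ^ (k - 1)`, `1 ↦ -X ^ (q - 2) = -X⁻¹` on functions
`𝔽_q^× → 𝔽_q`: a weighted cyclic shift. Hence `det (1 + t C) = det (1 + t N)`, and in the latter
only the identity and the full cycle contribute, giving `1 + (-1) ^ (q - 3) (q - 2)! t ^ (q - 1)`.
For `q = p` odd, Wilson's theorem gives `(p - 2)! = 1`.
-/

open Matrix Finset
open scoped Nat

namespace Matrix

variable {R : Type*} {n : ℕ}

def weightedCycle [Zero R] (d : Fin (n + 2) → R) (c : R) : Matrix (Fin (n + 2)) (Fin (n + 2)) R :=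
  of fun a b => if (b : ℕ) = a + 1 then d b else if (a : ℕ) = n + 1 ∧ (b : ℕ) = 0 then c else 0

theorem smul_weightedCycle [MulZeroClass R] (t : R) (d : Fin (n + 2) → R) (c : R) :
    t • weightedCycle d c = weightedCycle (fun b => t * d b) (t * c) := by
  ext a b
  simp only [weightedCycle, smul_apply, of_apply, smul_eq_mul]
  split_ifs <;> simp

section Semiring

variable [NonUnitalNonAssocSemiring R] {m : Type*} (A : Matrix m (Fin (n + 2)) R)
  (d : Fin (n + 2) → R) (c : R) (i : m)

theorem mul_weightedCycle_apply_zero : (A * weightedCycle d c) i 0 = A i (Fin.last _) * c := by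
  rw [mul_apply, sum_eq_single (Fin.last _)]
  · simp [weightedCycle]
  · intro a _ ha
    have : (a : ℕ) ≠ n + 1 := fun h => ha (Fin.ext h)
    simp [weightedCycle, this]
  · simp

theorem mul_weightedCycle_apply_succ (k : Fin (n + 1)) :
    (A * weightedCycle d c) i k.succ = A i k.castSucc * d k.succ := by
  rw [mul_apply, sum_eq_single k.castSucc]
  · simp [weightedCycle]
  · intro a _ ha
    have : (k : ℕ) ≠ a := fun h => ha (Fin.ext h.symm)
    simp [weightedCycle, this]
  · simp

end Semiring

section CommRing

variable [CommRing R] (d : Fin (n + 2) → R) (c : R)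

theorem det_one_add_weightedCycle_submatrix_succ_succ :
    ((1 + weightedCycle d c).submatrix Fin.succ Fin.succ).det = 1 := by
  rw [det_of_isUpperTriangular]
  · refine prod_eq_one fun a _ => ?_
    simp [weightedCycle]
  · intro a b (hab : b < a)
    have : (b : ℕ) < a := hab
    simp only [weightedCycle, add_apply, one_apply, of_apply, submatrix_apply, Fin.succ_inj,
      Fin.val_succ]
    split_ifs <;> first | omega | simp_all

theorem det_one_add_weightedCycle_submatrix_castSucc_succ :
    ((1 + weightedCycle d c).submatrix Fin.castSucc Fin.succ).det =
      ∏ b : Fin (n + 1), d b.succ := by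
  rw [det_of_isLowerTriangular]
  · refine prod_congr rfl fun a _ => ?_
    simp only [weightedCycle, add_apply, one_apply, of_apply, submatrix_apply, Fin.val_succ,
      Fin.val_castSucc, Fin.ext_iff]
    simp
  · intro a b (hab : a < b)
    have : (a : ℕ) < b := hab
    simp only [weightedCycle, add_apply, one_apply, of_apply, submatrix_apply, Fin.val_succ,
      Fin.val_castSucc, Fin.ext_iff]
    split_ifs <;> first | omega | simp

theorem det_one_add_weightedCycle :
    (1 + weightedCycle d c).det = 1 + (-1) ^ (n + 1) * c * ∏ b : Fin (n + 1), d b.succ := by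
  have hcorner : ∀ i : Fin (n + 1), i ≠ Fin.last n → (1 + weightedCycle d c) i.succ 0 = 0 := by
    intro i hi
    have : (i : ℕ) ≠ n := fun h => hi (Fin.ext h)
    simp [weightedCycle, this]
  rw [det_succ_column_zero, Fin.sum_univ_succ, sum_eq_single (Fin.last n)
    (fun i _ hi => by rw [hcorner i hi, mul_zero, zero_mul]) (by simp)]
  simp only [Fin.succAbove_zero, Fin.succ_last, Fin.succAbove_last,
    det_one_add_weightedCycle_submatrix_succ_succ,
    det_one_add_weightedCycle_submatrix_castSucc_succ]
  simp [weightedCycle, mul_assoc]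

end CommRing

end Matrix

namespace FiniteField

variable {K : Type*} [Field K] [Fintype K]

theorem sum_inv_eq_zero (hK : 2 < Fintype.card K) : ∑ u : K, u⁻¹ = 0 := by
  rw [Fintype.sum_equiv (Equiv.inv K) (·⁻¹) id fun _ => rfl]
  simpa using sum_pow_lt_card_sub_one K 1 (by omega)

theorem sum_mul_inv_mul_eq_sum_sub (f : K → K) :
    ∑ u : K, u * u⁻¹ * f u = ∑ u, f u - f 0 := by
  classical
  rw [← sum_erase_eq_sub (mem_univ 0),
    ← sum_erase univ (f := fun u => u * u⁻¹ * f u) (a := 0) (by simp)]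
  exact sum_congr rfl fun u hu => by rw [mul_inv_cancel₀ (ne_of_mem_erase hu), one_mul]

theorem sum_inv_mul_sub_pow (hK : 2 < Fintype.card K) (x : K) {k : ℕ}
    (hk : k ≤ Fintype.card K - 2) : ∑ u : K, u⁻¹ * (x - u) ^ k = k * x ^ (k - 1) := by
  induction k with
  | zero => simpa using sum_inv_eq_zero hK
  | succ k ih =>
    have hsum : ∑ u : K, (x - u) ^ k = 0 := by
      rw [Fintype.sum_equiv (Equiv.subLeft x) (fun u => (x - u) ^ k) (· ^ k) fun _ => rfl]
      exact sum_pow_lt_card_sub_one K k (by omega)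
    calc ∑ u : K, u⁻¹ * (x - u) ^ (k + 1)
        = x * ∑ u : K, u⁻¹ * (x - u) ^ k - ∑ u : K, u * u⁻¹ * (x - u) ^ k := by
          rw [mul_sum, ← sum_sub_distrib]
          exact sum_congr rfl fun u _ => by ring
      _ = x * (k * x ^ (k - 1)) + x ^ k := by
          rw [ih (by omega), sum_mul_inv_mul_eq_sum_sub, hsum, sub_zero]; ring
      _ = ↑(k + 1) * x ^ k := by
          cases k <;> simp [pow_succ]; ring

theorem sum_comp_eq_sum_sub_zero {ι : Type*} [Fintype ι] {x : ι → K} (hx : Function.Injective x)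
    (hx0 : ∀ i, x i ≠ 0) (hcard : Fintype.card ι + 1 = Fintype.card K) (f : K → K) :
    ∑ i, f (x i) = ∑ u, f u - f 0 := by
  classical
  have himage : univ.image x = univ.erase 0 := by
    refine eq_of_subset_of_card_le (fun u hu => ?_) ?_
    · obtain ⟨i, -, rfl⟩ := mem_image.mp hu
      exact mem_erase.mpr ⟨hx0 i, mem_univ _⟩
    · rw [card_image_of_injective _ hx, card_erase_of_mem (mem_univ _), card_univ, card_univ]
      omega
  rw [← sum_erase_eq_sub (mem_univ 0), ← himage, sum_image fun i _ j _ h => hx h]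

theorem sum_inv_sub_mul_pow (hK : 2 < Fintype.card K) {ι : Type*} [Fintype ι] {x : ι → K}
    (hx : Function.Injective x) (hx0 : ∀ i, x i ≠ 0) (hcard : Fintype.card ι + 1 = Fintype.card K)
    (i : ι) {k : ℕ} (hk : k ≤ Fintype.card K - 2) :
    ∑ j, (x i - x j)⁻¹ * x j ^ k = k * x i ^ (k - 1) - (x i)⁻¹ * 0 ^ k := by
  rw [sum_comp_eq_sum_sub_zero hx hx0 hcard (fun y => (x i - y)⁻¹ * y ^ k),
    Fintype.sum_equiv (Equiv.subLeft (x i)) _ (fun u => u⁻¹ * (x i - u) ^ k)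
      fun y => by simp, sum_inv_mul_sub_pow hK _ hk, sub_zero]

section Vandermonde

variable {n : ℕ}

theorem inv_sub_mul_vandermonde (hK : Fintype.card K = n + 3) {x : Fin (n + 2) → K}
    (hx : Function.Injective x) (hx0 : ∀ i, x i ≠ 0) :
    of (fun i j => (x i - x j)⁻¹) * vandermonde x =
      vandermonde x * weightedCycle (fun b => ((b : ℕ) : K)) (-1) := by
  have hcard : Fintype.card (Fin (n + 2)) + 1 = Fintype.card K := by simp [hK]
  have hK2 : 2 < Fintype.card K := by omega
  ext i k
  refine Fin.cases ?_ (fun k => ?_) k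
  · have hinv : x i ^ (n + 1) = (x i)⁻¹ := by
      refine eq_inv_of_mul_eq_one_left ?_
      rw [← pow_succ]
      simpa [hK] using pow_card_sub_one_eq_one (x i) (hx0 i)
    rw [mul_weightedCycle_apply_zero, mul_apply]
    simp only [of_apply, vandermonde_apply, Fin.val_zero, Fin.val_last]
    rw [sum_inv_sub_mul_pow hK2 hx hx0 hcard i (by omega), hinv]
    simp
  · rw [mul_weightedCycle_apply_succ, mul_apply]
    simp only [of_apply, vandermonde_apply, Fin.val_succ, Fin.val_castSucc]
    rw [sum_inv_sub_mul_pow hK2 hx hx0 hcard i (by omega)]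
    simp [mul_comm]

theorem det_one_add_smul_inv_sub (hK : Fintype.card K = n + 3) {x : Fin (n + 2) → K}
    (hx : Function.Injective x) (hx0 : ∀ i, x i ≠ 0) (t : K) :
    (1 + t • of fun i j => (x i - x j)⁻¹).det = 1 + (-1) ^ n * (n + 1)! * t ^ (n + 2) := by
  set C : Matrix (Fin (n + 2)) (Fin (n + 2)) K := of fun i j => (x i - x j)⁻¹
  set N := weightedCycle (fun b => ((b : ℕ) : K)) (-1)
  have hsimilar : (1 + t • C) * vandermonde x = vandermonde x * (1 + t • N) := by
    rw [add_mul, mul_add, one_mul, mul_one, Matrix.smul_mul, Matrix.mul_smul,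
      inv_sub_mul_vandermonde hK hx hx0]
  have hdet : (1 + t • C).det = (1 + t • N).det := by
    refine mul_right_cancel₀ (det_vandermonde_ne_zero_iff.mpr hx) ?_
    rw [← det_mul, hsimilar, det_mul, mul_comm]
  have hfactorial : ∏ b : Fin (n + 1), (((b.succ : Fin (n + 2)) : ℕ) : K) = (n + 1)! := by
    rw [← Nat.cast_prod]
    simp only [Fin.val_succ]
    rw [Fin.prod_univ_eq_prod_range (· + 1), prod_range_add_one_eq_factorial]
  rw [hdet, smul_weightedCycle, det_one_add_weightedCycle, prod_mul_distrib, hfactorial,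
    prod_const, card_univ, Fintype.card_fin]
  ring

end Vandermonde

end FiniteField

theorem ZMod.natCast_factorial_sub_two (p : ℕ) [Fact p.Prime] : ((p - 2)! : ZMod p) = 1 := by
  have hwilson := ZMod.wilsons_lemma (p := p)
  obtain ⟨k, rfl⟩ : ∃ k, p = k + 2 := ⟨p - 2, by have := (Fact.out : p.Prime).two_le; omega⟩
  have hchar : ((k + 2 : ℕ) : ZMod (k + 2)) = 0 := ZMod.natCast_self _
  rw [show k + 2 - 1 = k + 1 by omega, Nat.factorial_succ] at hwilson
  push_cast at hwilson hchar ⊢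
  linear_combination ((k ! : ℕ) : ZMod (k + 2)) * hchar - hwilson

/-- For every odd prime `p` and `t ∈ 𝔽_p`, `det(I_{p-1} + t C_p) = 1 + t^{p-1}` in `𝔽_p`. -/
theorem stmt15 (p : ℕ) [Fact p.Prime] (hodd : p ≠ 2) (t : ZMod p) :
    Matrix.det
        ((1 : Matrix (Fin (p - 1)) (Fin (p - 1)) (ZMod p)) +
          t • Matrix.of fun i j : Fin (p - 1) =>
            if i = j then (0 : ZMod p)
            else ((((i : ℕ) : ZMod p) + 1) - (((j : ℕ) : ZMod p) + 1))⁻¹)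
      = 1 + t ^ (p - 1) := by
  have hp := (Fact.out : p.Prime)
  obtain ⟨m, rfl⟩ : ∃ m, p = m + 3 := ⟨p - 3, by have := hp.two_le; omega⟩
  have hm : Even m := by simpa [Nat.even_add_one, parity_simps] using hp.odd_of_ne_two hodd
  set x : Fin (m + 2) → ZMod (m + 3) := fun i => ((i : ℕ) : ZMod (m + 3)) + 1
  have hx_val : ∀ i, (x i).val = i + 1 := fun i => by
    simpa [x] using ZMod.val_cast_of_lt (n := m + 3) (a := i + 1) (by omega)
  have hx : Function.Injective x := fun i j h =>
    Fin.ext (by simpa [hx_val] using congrArg ZMod.val h)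
  have hx0 : ∀ i, x i ≠ 0 := fun i h => by simpa [hx_val] using congrArg ZMod.val h
  -- Lean's `0⁻¹ = 0` already puts zeros on the diagonal of `(x i - x j)⁻¹`.
  have hdiag : (of fun i j : Fin (m + 2) => if i = j then (0 : ZMod (m + 3)) else (x i - x j)⁻¹) =
      of fun i j => (x i - x j)⁻¹ := by
    ext i j
    by_cases h : i = j <;> simp [h]
  have hwilson : ((m + 1)! : ZMod (m + 3)) = 1 := ZMod.natCast_factorial_sub_two (m + 3)
  change (1 + t • of fun i j => if i = j then 0 else (x i - x j)⁻¹).det = 1 + t ^ (m + 2)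
  rw [hdiag, FiniteField.det_one_add_smul_inv_sub (ZMod.card _) hx hx0, hm.neg_one_pow, hwilson]
  ring
end

section
/- Let p ≡ 3 (mod 4) be an odd prime, m = (p-1)/2, and let μ_m ⊂ F_p^× be the set of m-th roots of unity (equal to the set of nonzero squares {1^2,...,m^2}). For 0 ≤ k ≤ m-1, the sum over t ∈ μ_m \ {1} of t^k/(1-t) equals (m-1)/2 if k=0 and k - (m+1)/2 if 1 ≤ k ≤ m-1 (as elements of F_p). -/
/-!
For `t ≠ 1` we have `t^k/(1-t) = 1/(1-t) - (1 + t + ⋯ + t^(k-1))`, so the sum splits into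
`∑ 1/(1-t)` and power sums over `μ_m \ {1}`. Pairing `t` with `t⁻¹`, and using
`1/(1-t) + 1/(1-t⁻¹) = 1`, gives `2 ∑ 1/(1-t) = m - 1`. Writing `μ_m` as the powers of a primitive
root `ζ` turns `∑_{t ∈ μ_m} t^j` into a geometric sum in `ζ^j`, which vanishes for `0 < j < m`; hence
`∑_{t ≠ 1} t^j` is `-1` for those `j` and `m - 1` for `j = 0`. Since `p ≡ 3 (mod 4)`, `m` is odd and
the halves `(m ∓ 1)/2` are integers.
-/

open Finset Polynomial

theorem inv_one_sub_add_inv_one_sub_inv {K : Type*} [Field K] {t : K} (h0 : t ≠ 0) (h1 : t ≠ 1) :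
    (1 - t)⁻¹ + (1 - t⁻¹)⁻¹ = 1 := by
  have : 1 - t ≠ 0 := sub_ne_zero.mpr (Ne.symm h1)
  field_simp
  ring

theorem two_mul_sum_inv_one_sub {K : Type*} [Field K] (T : Finset K) (hT : ∀ t ∈ T, t⁻¹ ∈ T)
    (h0 : 0 ∉ T) (h1 : 1 ∉ T) : 2 * ∑ t ∈ T, (1 - t)⁻¹ = #T := by
  have hswap : ∑ t ∈ T, (1 - t⁻¹)⁻¹ = ∑ t ∈ T, (1 - t)⁻¹ :=
    sum_nbij' (·⁻¹) (·⁻¹) hT hT (fun t _ => inv_inv t) (fun t _ => inv_inv t) fun _ _ => rfl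
  calc 2 * ∑ t ∈ T, (1 - t)⁻¹ = ∑ t ∈ T, ((1 - t)⁻¹ + (1 - t⁻¹)⁻¹) := by
        rw [sum_add_distrib, hswap, two_mul]
    _ = #T := by
        rw [card_eq_sum_ones, Nat.cast_sum, Nat.cast_one]
        exact sum_congr rfl fun t ht =>
          inv_one_sub_add_inv_one_sub_inv (ne_of_mem_of_not_mem ht h0) (ne_of_mem_of_not_mem ht h1)

theorem pow_div_one_sub_eq {K : Type*} [Field K] {t : K} (h1 : t ≠ 1) (k : ℕ) :
    t ^ k / (1 - t) = (1 - t)⁻¹ - ∑ i ∈ range k, t ^ i := by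
  have : 1 - t ≠ 0 := sub_ne_zero.mpr (Ne.symm h1)
  have hg := geom_sum_mul t k
  field_simp
  linear_combination -hg

namespace IsPrimitiveRoot

section CommRing
variable {R : Type*} [CommRing R] [IsDomain R] {ζ : R} {m : ℕ}

theorem sum_nthRootsFinset_one {M : Type*} [AddCommMonoid M] (hζ : IsPrimitiveRoot ζ m)
    (f : R → M) : ∑ t ∈ nthRootsFinset m (1 : R), f t = ∑ i ∈ range m, f (ζ ^ i) := by
  classical
  have himage : nthRootsFinset m (1 : R) = (range m).image (ζ ^ ·) := by
    rw [nthRootsFinset_def, nthRoots_eq hζ (one_pow m)]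
    simp [Finset.image]
  rw [himage, sum_image hζ.injOn_pow]

theorem sum_nthRootsFinset_one_pow (hζ : IsPrimitiveRoot ζ m) {j : ℕ} (hj : ¬m ∣ j) :
    ∑ t ∈ nthRootsFinset m (1 : R), t ^ j = 0 := by
  have hne : ζ ^ j - 1 ≠ 0 := sub_ne_zero.mpr (mt (hζ.pow_eq_one_iff_dvd j).mp hj)
  have hgeom : (∑ i ∈ range m, (ζ ^ j) ^ i) * (ζ ^ j - 1) = 0 := by
    rw [geom_sum_mul, ← pow_mul, mul_comm, pow_mul, hζ.pow_eq_one, one_pow, sub_self]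
  rw [hζ.sum_nthRootsFinset_one]
  simp_rw [← pow_mul, mul_comm _ j, pow_mul]
  exact (mul_eq_zero.mp hgeom).resolve_right hne

theorem sum_nthRootsFinset_one_erase_one_pow [DecidableEq R] (hζ : IsPrimitiveRoot ζ m) {j : ℕ}
    (hj : j < m) :
    ∑ t ∈ (nthRootsFinset m (1 : R)).erase 1, t ^ j = (if j = 0 then (m : R) else 0) - 1 := by
  have hadd := sum_erase_add _ (· ^ j) (one_mem_nthRootsFinset (R := R) (by omega : 0 < m))
  rw [one_pow] at hadd
  rw [eq_sub_iff_add_eq, hadd]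
  split_ifs with hj0
  · simp [hj0, hζ.card_nthRootsFinset]
  · exact hζ.sum_nthRootsFinset_one_pow fun h => hj0 (Nat.eq_zero_of_dvd_of_lt h hj)

end CommRing

variable {K : Type*} [Field K] [DecidableEq K] {ζ : K} {m : ℕ}

theorem two_mul_sum_nthRootsFinset_one_erase_one_inv_one_sub (hζ : IsPrimitiveRoot ζ m)
    (hm : 0 < m) : 2 * ∑ t ∈ (nthRootsFinset m (1 : K)).erase 1, (1 - t)⁻¹ = m - 1 := by
  have hmem : ∀ {t : K}, t ∈ nthRootsFinset m (1 : K) ↔ t ^ m = 1 :=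
    Polynomial.mem_nthRootsFinset hm 1
  rw [two_mul_sum_inv_one_sub, card_erase_of_mem (one_mem_nthRootsFinset hm),
    hζ.card_nthRootsFinset, Nat.cast_pred hm]
  · intro t ht
    rw [mem_erase, hmem] at ht ⊢
    exact ⟨inv_ne_one.mpr ht.1, by rw [inv_pow, ht.2, inv_one]⟩
  · rw [mem_erase, hmem, zero_pow hm.ne']
    exact fun h => zero_ne_one h.2
  · exact notMem_erase 1 _

theorem two_mul_sum_nthRootsFinset_one_erase_one_pow_div_one_sub (hζ : IsPrimitiveRoot ζ m)
    {k : ℕ} (hk : k < m) :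
    2 * ∑ t ∈ (nthRootsFinset m (1 : K)).erase 1, t ^ k / (1 - t)
      = if k = 0 then (m : K) - 1 else 2 * k - (m + 1) := by
  have hpow : ∑ j ∈ range k, ∑ t ∈ (nthRootsFinset m (1 : K)).erase 1, t ^ j
      = (if k = 0 then 0 else (m : K)) - k := by
    rw [sum_congr rfl fun j hj => hζ.sum_nthRootsFinset_one_erase_one_pow
      ((mem_range.mp hj).trans hk), sum_sub_distrib, sum_ite_eq' (range k) 0, sum_const,
      card_range, nsmul_one]
    rcases Nat.eq_zero_or_pos k with rfl | hk0
    · simp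
    · simp [hk0, hk0.ne']
  rw [sum_congr rfl fun t ht => pow_div_one_sub_eq (ne_of_mem_erase ht) k, sum_sub_distrib,
    sum_comm, hpow, mul_sub, hζ.two_mul_sum_nthRootsFinset_one_erase_one_inv_one_sub (by omega)]
  split_ifs with hk0
  · simp [hk0]
  · ring

end IsPrimitiveRoot

/-- For `p ≡ 3 (mod 4)`, `m = (p-1)/2`, and `0 ≤ k ≤ m-1`, the sum over the `m`-th roots of
unity `t ≠ 1` in `𝔽_p` of `t^k/(1-t)` equals `(m-1)/2` if `k = 0` and `k - (m+1)/2` otherwise. -/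
theorem stmt16 (p : ℕ) [Fact p.Prime] (hp : p % 4 = 3) (k : ℕ)
    (hk : k ≤ (p - 1) / 2 - 1) :
    ∑ t ∈ (Finset.univ.filter (fun x : ZMod p => x ^ ((p - 1) / 2) = 1)).erase 1,
        t ^ k / (1 - t)
      = if k = 0 then ((((p - 1) / 2 - 1) / 2 : ℕ) : ZMod p)
        else (k : ZMod p) - ((((p - 1) / 2 + 1) / 2 : ℕ) : ZMod p) := by
  set m := (p - 1) / 2
  obtain ⟨n, hn⟩ : ∃ n, m = 2 * n + 1 := ⟨m / 2, by omega⟩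
  obtain ⟨ζ, hζ⟩ : ∃ ζ : ZMod p, IsPrimitiveRoot ζ m := by
    obtain ⟨ζ, hζ⟩ := HasEnoughRootsOfUnity.exists_primitiveRoot (ZMod p) (p - 1)
    exact ⟨ζ ^ 2, hζ.pow (by omega) (by omega)⟩
  have hroots : univ.filter (fun x : ZMod p => x ^ m = 1) = nthRootsFinset m 1 := by
    ext x
    simp [Polynomial.mem_nthRootsFinset (by omega : 0 < m)]
  have h2 : (2 : ZMod p) ≠ 0 := Ring.two_ne_zero (by rw [ZMod.ringChar_zmod_n]; omega)
  rw [hroots, show (m - 1) / 2 = n by omega, show (m + 1) / 2 = n + 1 by omega]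
  apply mul_left_cancel₀ h2
  rw [hζ.two_mul_sum_nthRootsFinset_one_erase_one_pow_div_one_sub (by omega), hn]
  split_ifs <;> push_cast <;> ring
end

section
/- Let p ≡ 3 (mod 4) be an odd prime and m = (p-1)/2. Let Q_p be the m×m matrix over F_p with zero diagonal and (i,j) entry (i^2 - j^2)^{-1} for i ≠ j. Then for every u ∈ F_p, per(I_m + u Q_p) = 1 in F_p. -/
open Finset Polynomial
open scoped Matrix

section Permanent

variable {n : Type*} [Fintype n] [DecidableEq n] {R : Type*} [CommRing R]

theorem permanent_eq_matrix_permanent (M : Matrix n n R) : permanent M = M.permanent := by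
  rw [← Matrix.permanent_transpose]; rfl

theorem permanent_one : permanent (1 : Matrix n n R) = 1 := by
  rw [permanent_eq_matrix_permanent, Matrix.permanent_one]

theorem permanent_transpose (M : Matrix n n R) : permanent Mᵀ = permanent M := by
  rw [permanent_eq_matrix_permanent, permanent_eq_matrix_permanent, Matrix.permanent_transpose]

theorem permanent_submatrix_equiv (e : Equiv.Perm n) (M : Matrix n n R) :
    permanent (M.submatrix e e) = permanent M := by
  have : M.submatrix e e = (M.submatrix e id).submatrix id e := M.submatrix_submatrix _ _ _ _
  rw [permanent_eq_matrix_permanent, permanent_eq_matrix_permanent, this,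
    Matrix.permanent_permute_rows, Matrix.permanent_permute_cols]

theorem Matrix.permanent_map {S : Type*} [CommRing S] (f : R →+* S) (M : Matrix n n R) :
    (M.map f).permanent = f M.permanent := by
  simp [Matrix.permanent, map_sum, map_prod]

theorem Matrix.natDegree_permanent_le {d : ℕ} (M : Matrix n n R[X])
    (h : ∀ i j, (M i j).natDegree ≤ d) : M.permanent.natDegree ≤ Fintype.card n * d := by
  refine natDegree_sum_le_of_forall_le _ _ fun σ _ => (natDegree_prod_le _ _).trans ?_
  exact (sum_le_card_nsmul _ _ d fun i _ => h (σ i) i).trans_eq (by rw [card_univ, smul_eq_mul])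

theorem exists_natDegree_le_eval_eq_permanent_add_smul (A B : Matrix n n R) :
    ∃ P : R[X], P.natDegree ≤ Fintype.card n ∧ ∀ u, P.eval u = permanent (A + u • B) := by
  refine ⟨(Matrix.of fun i j => C (B i j) * X + C (A i j)).permanent, ?_, fun u => ?_⟩
  · refine (Matrix.natDegree_permanent_le _ fun i j => ?_).trans (mul_one _).le
    rw [Matrix.of_apply]
    exact natDegree_linear_le
  rw [← coe_evalRingHom, ← Matrix.permanent_map, permanent_eq_matrix_permanent]
  congr 1
  ext i j
  simp only [Matrix.map_apply, Matrix.of_apply, coe_evalRingHom, eval_add, eval_mul, eval_C,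
    eval_X, Matrix.add_apply, Matrix.smul_apply, smul_eq_mul]
  ring

end Permanent

theorem Polynomial.eq_C_of_natDegree_lt_card_of_eval_eq {R : Type*} [CommRing R] [IsDomain R]
    (P : R[X]) (s : Finset R) (c : R) (hdeg : P.natDegree < #s) (hP : ∀ a ∈ s, P.eval a = c) :
    P = C c := by
  refine sub_eq_zero.mp (eq_zero_of_natDegree_lt_card_of_eval_eq_zero' _ s (fun a ha => ?_) ?_)
  · rw [eval_sub, eval_C, hP a ha, sub_self]
  · exact (natDegree_sub_C).trans_lt hdeg

theorem FiniteField.isSquare_or_isSquare_neg {F : Type*} [Field F] [Fintype F]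
    (hF : Fintype.card F % 4 = 3) (a : F) : IsSquare a ∨ IsSquare (-a) := by
  classical
  refine or_iff_not_imp_left.mpr fun ha => ?_
  have ha0 : a ≠ 0 := fun h => ha (h ▸ IsSquare.zero)
  have hneg : ¬IsSquare (-1 : F) := by rw [FiniteField.isSquare_neg_one_iff]; omega
  rw [← quadraticChar_one_iff_isSquare (neg_ne_zero.mpr ha0), neg_eq_neg_one_mul, map_mul,
    quadraticChar_neg_one_iff_not_isSquare.mpr hneg, quadraticChar_neg_one_iff_not_isSquare.mpr ha]
  norm_num

theorem exists_perm_apply_eq_mul {n K : Type*} [Finite n] [MonoidWithZero K]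
    [IsLeftCancelMulZero K] {s : n → K} (hs : Function.Injective s) {c : K} (hc : c ≠ 0)
    (h : ∀ i, ∃ j, s j = c * s i) :
    ∃ e : Equiv.Perm n, ∀ i, s (e i) = c * s i := by
  choose π hπ using h
  have hinj : Function.Injective π := fun i j hij =>
    hs (mul_left_cancel₀ hc (by rw [← hπ, ← hπ, hij]))
  exact ⟨Equiv.ofBijective π (Finite.injective_iff_bijective.mp hinj), hπ⟩

section InvDiffMatrix

variable {n K : Type*} [DecidableEq n] [Field K]

def invDiffMatrix (s : n → K) : Matrix n n K :=
  Matrix.of fun i j => if i = j then 0 else (s i - s j)⁻¹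

theorem invDiffMatrix_transpose (s : n → K) : (invDiffMatrix s)ᵀ = -invDiffMatrix s := by
  ext i j
  simp only [invDiffMatrix, Matrix.transpose_apply, Matrix.neg_apply, Matrix.of_apply, eq_comm]
  split_ifs
  · simp
  · rw [← inv_neg, neg_sub]

theorem invDiffMatrix_submatrix {s : n → K} {c : K} (e : Equiv.Perm n)
    (hs : ∀ i, s (e i) = c * s i) : (invDiffMatrix s).submatrix e e = c⁻¹ • invDiffMatrix s := by
  ext i j
  simp only [invDiffMatrix, Matrix.submatrix_apply, Matrix.smul_apply, Matrix.of_apply,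
    e.apply_eq_iff_eq, hs, ← mul_sub, mul_inv, smul_eq_mul]
  split_ifs <;> simp

theorem permanent_one_add_neg_smul_invDiffMatrix [Fintype n] (s : n → K) (u : K) :
    permanent (1 + (-u) • invDiffMatrix s) = permanent (1 + u • invDiffMatrix s) := by
  rw [← permanent_transpose]
  simp [Matrix.transpose_add, invDiffMatrix_transpose]

theorem permanent_one_add_smul_invDiffMatrix_of_perm [Fintype n] {s : n → K} {c : K}
    (e : Equiv.Perm n) (hs : ∀ i, s (e i) = c * s i) (u : K) :
    permanent (1 + (c⁻¹ * u) • invDiffMatrix s) = permanent (1 + u • invDiffMatrix s) := by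
  have : (1 + u • invDiffMatrix s).submatrix e e
      = (1 : Matrix n n K).submatrix e e + u • (invDiffMatrix s).submatrix e e := rfl
  rw [← permanent_submatrix_equiv e (1 + u • _), this, Matrix.submatrix_one_equiv,
    invDiffMatrix_submatrix e hs, smul_smul, mul_comm u]

end InvDiffMatrix

def halfSystemSq (p : ℕ) (i : Fin ((p - 1) / 2)) : ZMod p := (((i : ℕ) : ZMod p) + 1) ^ 2

section HalfSystem

variable {p : ℕ}

theorem ZMod.natCast_ne_zero_of_pos_of_lt {k : ℕ} (hk0 : 0 < k) (hkp : k < p) :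
    (k : ZMod p) ≠ 0 :=
  fun h => absurd (Nat.le_of_dvd hk0 ((ZMod.natCast_eq_zero_iff k p).mp h)) hkp.not_ge

theorem halfSystemSq_injective [Fact p.Prime] : Function.Injective (halfSystemSq p) := by
  intro i j hij
  have hi := i.isLt
  have hj := j.isLt
  rcases sq_eq_sq_iff_eq_or_eq_neg.mp hij with h | h
  · have : (((i : ℕ) + 1 : ℕ) : ZMod p) = (((j : ℕ) + 1 : ℕ) : ZMod p) := by push_cast; exact h
    rw [ZMod.natCast_eq_natCast_iff', Nat.mod_eq_of_lt (by omega),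
      Nat.mod_eq_of_lt (by omega)] at this
    exact Fin.ext (by omega)
  · refine absurd ?_ (ZMod.natCast_ne_zero_of_pos_of_lt (p := p) (k := i + 1 + (j + 1))
      (by omega) (by omega))
    push_cast
    rw [h, neg_add_cancel]

theorem exists_halfSystemSq_eq_sq (hp : Odd p) {a : ZMod p} (ha : a ≠ 0) :
    ∃ i, halfSystemSq p i = a ^ 2 := by
  have : NeZero p := ⟨hp.pos.ne'⟩
  set k := a.valMinAbs.natAbs with hk
  have hk0 : 0 < k := by simpa [hk] using ha
  have hkp : k ≤ (p - 1) / 2 := by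
    have := ZMod.natAbs_valMinAbs_le a
    obtain ⟨r, rfl⟩ := hp
    omega
  refine ⟨⟨k - 1, by omega⟩, ?_⟩
  rw [halfSystemSq, Nat.cast_pred hk0, sub_add_cancel, hk, ZMod.natCast_natAbs_valMinAbs]
  split_ifs <;> simp only [neg_sq]

theorem exists_perm_halfSystemSq_mul [Fact p.Prime] (hp : p ≠ 2) {c : ZMod p} (hc : IsSquare c)
    (hc0 : c ≠ 0) : ∃ e : Equiv.Perm (Fin ((p - 1) / 2)), ∀ i,
      halfSystemSq p (e i) = c * halfSystemSq p i := by
  obtain ⟨g, rfl⟩ := hc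
  refine exists_perm_apply_eq_mul halfSystemSq_injective hc0 fun i => ?_
  have hi : ((i : ℕ) : ZMod p) + 1 ≠ 0 := by
    exact_mod_cast ZMod.natCast_ne_zero_of_pos_of_lt (Nat.succ_pos i) (by omega)
  obtain ⟨j, hj⟩ := exists_halfSystemSq_eq_sq ((Fact.out : p.Prime).odd_of_ne_two hp)
    (mul_ne_zero (left_ne_zero_of_mul hc0) hi)
  exact ⟨j, by rw [hj, halfSystemSq]; ring⟩

theorem permanent_one_add_smul_invDiffMatrix_halfSystemSq [Fact p.Prime] (hp : p % 4 = 3)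
    {w : ZMod p} (hw : w ≠ 0) : permanent (1 + w • invDiffMatrix (halfSystemSq p)) =
      permanent (1 + (1 : ZMod p) • invDiffMatrix (halfSystemSq p)) := by
  have of_isSquare : ∀ c : ZMod p, c ≠ 0 → IsSquare c → permanent (1 + c • invDiffMatrix
      (halfSystemSq p)) = permanent (1 + (1 : ZMod p) • invDiffMatrix (halfSystemSq p)) := by
    intro c hc0 hc
    obtain ⟨e, he⟩ := exists_perm_halfSystemSq_mul (by omega) hc hc0
    rw [← permanent_one_add_smul_invDiffMatrix_of_perm e he, inv_mul_cancel₀ hc0]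
  rcases FiniteField.isSquare_or_isSquare_neg (by rwa [ZMod.card]) w with h | h
  · exact of_isSquare w hw h
  · rw [← permanent_one_add_neg_smul_invDiffMatrix]
    exact of_isSquare (-w) (neg_ne_zero.mpr hw) h

end HalfSystem

/-- For a prime `p ≡ 3 (mod 4)`, `m = (p-1)/2`, and every `u ∈ 𝔽_p`,
`per(I_m + u Q_p) = 1` in `𝔽_p`, where `Q_p` has zero diagonal and entries `(i²-j²)⁻¹`. -/
theorem stmt17 (p : ℕ) [Fact p.Prime] (hp : p % 4 = 3) (u : ZMod p) :
    permanent
        ((1 : Matrix (Fin ((p - 1) / 2)) (Fin ((p - 1) / 2)) (ZMod p)) +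
          u • Matrix.of fun i j : Fin ((p - 1) / 2) =>
            if i = j then (0 : ZMod p)
            else ((((i : ℕ) : ZMod p) + 1) ^ 2 - (((j : ℕ) : ZMod p) + 1) ^ 2)⁻¹)
      = 1 := by
  change permanent (1 + u • invDiffMatrix (halfSystemSq p)) = 1
  obtain ⟨P, hdeg, hP⟩ :=
    exists_natDegree_le_eval_eq_permanent_add_smul 1 (invDiffMatrix (halfSystemSq p))
  have hconst : P = C (P.eval 1) := by
    refine P.eq_C_of_natDegree_lt_card_of_eval_eq (univ.erase 0) _ ?_ fun w hw => ?_
    · rw [card_erase_of_mem (mem_univ _), card_univ, ZMod.card]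
      rw [Fintype.card_fin] at hdeg
      omega
    · rw [hP, hP]
      exact permanent_one_add_smul_invDiffMatrix_halfSystemSq hp (ne_of_mem_erase hw)
  calc permanent (1 + u • invDiffMatrix (halfSystemSq p)) = P.eval 0 := by
        rw [← hP, hconst, eval_C, eval_C]
    _ = 1 := by rw [hP, zero_smul, add_zero, permanent_one]
end

section
/- For every odd prime p, ((p-2)!!)^2 ≡ (-1)^{(p-1)/2} · 2^{p-1} · (p-1)! (mod p^2), where (p-2)!! = 1·3·5···(p-2) is the odd double factorial. -/
/-!
Write `p = 2m + 1`. The even numbers `2, 4, …, 4m`, whose product is `2^{2m} (2m)!`, pair up as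
`(p - (2i+1)) (p + (2i+1)) = p² - (2i+1)²` for `i < m`. Modulo `p²` each pair is `-(2i+1)²`, so
`2^{2m} (2m)! ≡ (-1)^m ((p-2)‼)² [ZMOD p²]`.
-/

open Finset Nat

theorem Nat.doubleFactorial_two_mul_sub_one (m : ℕ) :
    (2 * m - 1)‼ = ∏ i ∈ range m, (2 * i + 1) := by
  cases m with
  | zero => rfl
  | succ n =>
    rw [prod_range_succ', show 2 * (n + 1) - 1 = 2 * n + 1 by omega, doubleFactorial_eq_prod_odd]
    simp

theorem prod_range_sq_sub_odd_sq (m : ℕ) :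
    ∏ i ∈ range m, ((2 * m + 1 : ℤ) ^ 2 - (2 * i + 1) ^ 2) = 2 ^ (2 * m) * ((2 * m)! : ℤ) := by
  have hevens : (2 ^ (2 * m) * (2 * m)! : ℤ) = ∏ k ∈ range (2 * m), 2 * ((k : ℤ) + 1) := by
    exact_mod_cast (doubleFactorial_two_mul (2 * m)).symm.trans (doubleFactorial_eq_prod_even _)
  have hlow : ∏ k ∈ range m, 2 * ((k : ℤ) + 1) = ∏ k ∈ range m, 2 * ((m : ℤ) - k) := by
    rw [← prod_range_reflect]
    refine prod_congr rfl fun k hk => ?_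
    have := mem_range.1 hk
    omega
  rw [hevens, show 2 * m = m + m from two_mul m, prod_range_add, hlow, ← prod_mul_distrib]
  refine prod_congr rfl fun k _ => ?_
  push_cast
  ring

theorem doubleFactorial_two_mul_sub_one_sq_modEq (m : ℕ) :
    ((2 * m - 1)‼ : ℤ) ^ 2 ≡ (-1) ^ m * 2 ^ (2 * m) * (2 * m)! [ZMOD (2 * m + 1) ^ 2] := by
  have hsq : ((2 * m - 1)‼ : ℤ) ^ 2 = (-1) ^ m * ∏ i ∈ range m, (0 - (2 * i + 1 : ℤ) ^ 2) := by
    simp [doubleFactorial_two_mul_sub_one, prod_neg, ← mul_assoc, ← pow_add, prod_pow]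
  rw [hsq, mul_assoc, ← prod_range_sq_sub_odd_sq]
  refine Int.ModEq.mul_left _ (Int.ModEq.prod fun i _ => Int.ModEq.sub_right _ ?_)
  exact (Int.modEq_zero_iff_dvd.2 dvd_rfl).symm

/-- For every odd prime `p`, `((p-2)!!)² ≡ (-1)^{(p-1)/2} · 2^{p-1} · (p-1)! (mod p²)`. -/
theorem stmt18 (p : ℕ) [Fact p.Prime] (hodd : p ≠ 2) :
    ((Nat.doubleFactorial (p - 2) : ℤ)) ^ 2 ≡
      (-1) ^ ((p - 1) / 2) * 2 ^ (p - 1) * ((Nat.factorial (p - 1) : ℤ)) [ZMOD (p : ℤ) ^ 2] := by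
  obtain ⟨m, rfl⟩ : Odd p := (Fact.out : p.Prime).odd_of_ne_two hodd
  rw [show 2 * m + 1 - 2 = 2 * m - 1 by omega, show (2 * m + 1 - 1) / 2 = m by omega,
    Nat.add_sub_cancel]
  exact_mod_cast doubleFactorial_two_mul_sub_one_sq_modEq m
end
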